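/- arXiv:2402.02867 — 3 statements merged into one kernel-verified Lean document; each statement's English description precedes it below -/
import Mathlib

section
/- (Theorem 1, estimating equations of the minimum RP estimator.) For every α > 0, every x ∈ ℝ^{k+1}, and every standard basis vector y ∈ ℝ^{d+1}, the map β ↦ s^{(α)}(y,β) := Υ(α,y)/Γ(α)^{α/(1+α)} is differentiable, and for each m ∈ {1,…,d} its gradient with respect to the block β_m ∈ ℝ^{k+1} equals α times the m-th block of Ψ_α(β,x,y), i.e. equals α·Γ(α)^{−α/(1+α)}·(π_m(x,β)^α y_m − (Υ(α,y)/Γ(α))·π_m(x,β)^{α+1})·x. Consequently any interior maximizer β of (1/n)Σ_{i=1}^n s^{(α)}(y_i,β) (over data (x_i,y_i)) satisfies Σ_{i=1}^n Ψ_α(β,x_i,y_i) = 0. -/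
open Real Matrix Filter

noncomputable section

/-- PLRM probabilities. -/
def plrmPi {d k : ℕ} (x : Fin (k + 1) → ℝ) (β : Fin d → Fin (k + 1) → ℝ)
    (j : Fin (d + 1)) : ℝ :=
  (if h : (j : ℕ) < d then Real.exp (∑ t, x t * β ⟨j, h⟩ t) else 1) /
    (1 + ∑ s : Fin d, Real.exp (∑ t, x t * β s t))

/-- `Γ(α) = ∑_{j=1}^{d+1} π_j(x,β)^{α+1}`. -/
def Gam {d k : ℕ} (α : ℝ) (x : Fin (k + 1) → ℝ) (β : Fin d → Fin (k + 1) → ℝ) : ℝ :=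
  ∑ j, plrmPi x β j ^ (α + 1)

/-- `Υ(α,y) = ∑_{j=1}^{d+1} π_j(x,β)^α y_j`. -/
def Ups {d k : ℕ} (α : ℝ) (x : Fin (k + 1) → ℝ) (β : Fin d → Fin (k + 1) → ℝ)
    (y : Fin (d + 1) → ℝ) : ℝ :=
  ∑ j, plrmPi x β j ^ α * y j

/-- `s^{(α)}(y,β) = Υ(α,y)/Γ(α)^{α/(1+α)}`. -/
def sAlpha {d k : ℕ} (α : ℝ) (x : Fin (k + 1) → ℝ) (β : Fin d → Fin (k + 1) → ℝ)
    (y : Fin (d + 1) → ℝ) : ℝ :=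
  Ups α x β y / Gam α x β ^ (α / (1 + α))

/-- The `(m,t)` coordinate of the RP score `Ψ_α(β,x,y)`: the `m`-th block of length `k+1`
is `Γ(α)^{−α/(1+α)}·(π_m^α y_m − (Υ(α,y)/Γ(α))·π_m^{α+1})·x`. -/
def psiBlock {d k : ℕ} (α : ℝ) (x : Fin (k + 1) → ℝ) (β : Fin d → Fin (k + 1) → ℝ)
    (y : Fin (d + 1) → ℝ) (m : Fin d) (t : Fin (k + 1)) : ℝ :=
  Gam α x β ^ (-(α / (1 + α))) *
    (plrmPi x β m.castSucc ^ α * y m.castSucc -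
      Ups α x β y / Gam α x β * plrmPi x β m.castSucc ^ (α + 1)) * x t

/-! The PLRM probabilities are the softmax of the linear predictor
`η = (xᵀβ_1, …, xᵀβ_d, 0) ∈ ℝ^{d+1}`, which is linear in `β`, so the computation happens in `η`.
From `∂π_j/∂η_m = π_j (δ_{jm} − π_m)`, every power sum `U_p = Σ_j w_j π_j^p` has
`∂U_p/∂η_m = p (w_m π_m^p − π_m U_p)`. Applied to `s^{(α)} = U_α / U_{α+1}^{α/(1+α)}` (with `w = y`,
resp. `w = 1`), the two terms `α π_m Υ` cancel because `(α+1)·α/(1+α) = α`, leaving `α Ψ_α`.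
The estimating equations are then Fermat's rule at the maximiser. -/

section Softmax

variable {ι : Type*} [Fintype ι]

def softmax (z : ι → ℝ) (j : ι) : ℝ :=
  exp (z j) / ∑ i, exp (z i)

def powSum (p : ℝ) (w z : ι → ℝ) : ℝ :=
  ∑ j, softmax z j ^ p * w j

def powSumDeriv (p : ℝ) (w z : ι → ℝ) : (ι → ℝ) →L[ℝ] ℝ :=
  p • (∑ j, (softmax z j ^ p * w j) • ContinuousLinearMap.proj j -
    powSum p w z • ∑ i, softmax z i • ContinuousLinearMap.proj i)

def rpScore (α : ℝ) (w z : ι → ℝ) : ℝ :=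
  powSum α w z / powSum (α + 1) 1 z ^ (α / (1 + α))

lemma powSumDeriv_single [DecidableEq ι] (p : ℝ) (w z : ι → ℝ) (m : ι) (c : ℝ) :
    powSumDeriv p w z (Pi.single m c) =
      p * c * (softmax z m ^ p * w m - powSum p w z * softmax z m) := by
  simp [powSumDeriv, Pi.single_apply]
  ring

variable [Nonempty ι]

lemma sum_exp_pos (z : ι → ℝ) : 0 < ∑ i, exp (z i) :=
  Finset.sum_pos (fun _ _ => exp_pos _) Finset.univ_nonempty

lemma softmax_pos (z : ι → ℝ) (j : ι) : 0 < softmax z j :=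
  div_pos (exp_pos _) (sum_exp_pos z)

lemma powSum_one_pos (p : ℝ) (z : ι → ℝ) : 0 < powSum p 1 z :=
  Finset.sum_pos (fun j _ => by simpa using rpow_pos_of_pos (softmax_pos z j) p)
    Finset.univ_nonempty

lemma hasFDerivAt_softmax (z : ι → ℝ) (j : ι) :
    HasFDerivAt (fun z => softmax z j)
      (softmax z j • (ContinuousLinearMap.proj j -
        ∑ i, softmax z i • ContinuousLinearMap.proj (R := ℝ) (φ := fun _ : ι => ℝ) i)) z := by
  have hnum : HasFDerivAt (fun z : ι → ℝ => exp (z j))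
      (exp (z j) • ContinuousLinearMap.proj j) z :=
    (hasFDerivAt_apply j z).exp
  have hden : HasFDerivAt (fun z : ι → ℝ => ∑ i, exp (z i))
      (∑ i, exp (z i) • ContinuousLinearMap.proj i) z :=
    HasFDerivAt.fun_sum fun i _ => (hasFDerivAt_apply i z).exp
  refine (hnum.mul ((hasDerivAt_inv (sum_exp_pos z).ne').comp_hasFDerivAt z hden)).congr_fderiv ?_
  simp only [softmax, div_eq_inv_mul, mul_smul, ← Finset.smul_sum, Function.comp_apply]
  module

lemma hasFDerivAt_powSum (p : ℝ) (w z : ι → ℝ) :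
    HasFDerivAt (powSum p w) (powSumDeriv p w z) z := by
  refine (HasFDerivAt.fun_sum fun j _ => ((hasFDerivAt_softmax z j).rpow_const
    (Or.inl (softmax_pos z j).ne')).mul_const (w j)).congr_fderiv ?_
  set mean := ∑ i, softmax z i • ContinuousLinearMap.proj (R := ℝ) (φ := fun _ : ι => ℝ) i
  have hterm : ∀ j, w j • (p * softmax z j ^ (p - 1)) • softmax z j •
      (ContinuousLinearMap.proj j - mean) =
      p • (softmax z j ^ p * w j) • (ContinuousLinearMap.proj j - mean) := fun j => by
    have hπ := (softmax_pos z j).ne'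
    rw [smul_smul, smul_smul, smul_smul, rpow_sub_one hπ]
    congr 1
    field_simp
  rw [Finset.sum_congr rfl fun j _ => hterm j, ← Finset.smul_sum]
  simp only [smul_sub, Finset.sum_sub_distrib, Finset.sum_smul, powSumDeriv, powSum, mean]

lemma hasFDerivAt_rpScore (α : ℝ) (w z : ι → ℝ) :
    HasFDerivAt (rpScore α w)
      (powSum α w z • (-(α / (1 + α)) * powSum (α + 1) 1 z ^ (-(α / (1 + α)) - 1)) •
          powSumDeriv (α + 1) 1 z +
        powSum (α + 1) 1 z ^ (-(α / (1 + α))) • powSumDeriv α w z) z := by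
  have hG := powSum_one_pos (α + 1) z
  have hfun : rpScore α w =
      fun z => powSum α w z * powSum (α + 1) 1 z ^ (-(α / (1 + α))) := by
    funext z
    rw [rpScore, rpow_neg (powSum_one_pos (α + 1) z).le, div_eq_mul_inv]
  rw [hfun]
  exact (hasFDerivAt_powSum α w z).mul
    ((hasFDerivAt_powSum (α + 1) 1 z).rpow_const (Or.inl hG.ne'))

lemma fderiv_rpScore_single [DecidableEq ι] {α : ℝ} (hα : 1 + α ≠ 0) (w z : ι → ℝ) (m : ι)
    (c : ℝ) :
    fderiv ℝ (rpScore α w) z (Pi.single m c) =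
      α * (powSum (α + 1) 1 z ^ (-(α / (1 + α))) *
        (softmax z m ^ α * w m - powSum α w z / powSum (α + 1) 1 z * softmax z m ^ (α + 1)) *
          c) := by
  have hG := powSum_one_pos (α + 1) z
  rw [(hasFDerivAt_rpScore α w z).fderiv]
  simp only [FunLike.coe_add, FunLike.coe_smul, Pi.add_apply, Pi.smul_apply, smul_eq_mul,
    powSumDeriv_single, Pi.one_apply, mul_one, rpow_sub_one hG.ne']
  field_simp
  ring

end Softmax

def linPred {d k : ℕ} (x : Fin (k + 1) → ℝ) :
    (Fin d → Fin (k + 1) → ℝ) →L[ℝ] (Fin (d + 1) → ℝ) :=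
  ContinuousLinearMap.pi <| Fin.lastCases 0 fun s =>
    (∑ t, x t • ContinuousLinearMap.proj t).comp (ContinuousLinearMap.proj s)

section Plrm

variable {d k : ℕ} (x : Fin (k + 1) → ℝ)

lemma linPred_castSucc (b : Fin d → Fin (k + 1) → ℝ) (s : Fin d) :
    linPred x b s.castSucc = ∑ t, x t * b s t := by
  simp [linPred]

lemma linPred_last (b : Fin d → Fin (k + 1) → ℝ) : linPred x b (Fin.last d) = 0 := by
  simp [linPred]

lemma linPred_single (m : Fin d) (t : Fin (k + 1)) :
    linPred x (Pi.single m (Pi.single t 1)) = Pi.single m.castSucc (x t) := by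
  funext j
  cases j using Fin.lastCases with
  | last => simp [linPred_last]
  | cast s =>
    rcases eq_or_ne s m with rfl | h
    · simp [linPred_castSucc, Pi.single_apply]
    · simp [linPred_castSucc, h]

lemma plrmPi_eq_softmax (b : Fin d → Fin (k + 1) → ℝ) :
    plrmPi x b = softmax (linPred x b) := by
  funext j
  have hden : ∑ i, exp (linPred x b i) = 1 + ∑ s : Fin d, exp (∑ t, x t * b s t) := by
    simp [Fin.sum_univ_castSucc, linPred_castSucc, linPred_last, add_comm]
  rw [softmax, hden, plrmPi]
  congr 1
  cases j using Fin.lastCases with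
  | last => simp [linPred_last]
  | cast s => simp [linPred_castSucc]

variable (α : ℝ) (y : Fin (d + 1) → ℝ)

lemma sAlpha_eq_rpScore (b : Fin d → Fin (k + 1) → ℝ) :
    sAlpha α x b y = rpScore α y (linPred x b) := by
  simp [sAlpha, rpScore, powSum, Ups, Gam, plrmPi_eq_softmax]

lemma hasFDerivAt_sAlpha (β : Fin d → Fin (k + 1) → ℝ) :
    HasFDerivAt (fun b => sAlpha α x b y)
      ((fderiv ℝ (rpScore α y) (linPred x β)).comp (linPred x)) β := by
  simp_rw [sAlpha_eq_rpScore]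
  exact (hasFDerivAt_rpScore α y _).differentiableAt.hasFDerivAt.comp β (linPred x).hasFDerivAt

lemma fderiv_sAlpha_single {α : ℝ} (hα : 1 + α ≠ 0) (β : Fin d → Fin (k + 1) → ℝ) (m : Fin d)
    (t : Fin (k + 1)) :
    fderiv ℝ (fun b => sAlpha α x b y) β (Pi.single m (Pi.single t 1)) =
      α * psiBlock α x β y m t := by
  rw [(hasFDerivAt_sAlpha x α y β).fderiv, ContinuousLinearMap.comp_apply, linPred_single,
    fderiv_rpScore_single hα]
  simp [psiBlock, Ups, Gam, powSum, plrmPi_eq_softmax]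

end Plrm

theorem statement3_general (d k n : ℕ) (α : ℝ) (hα : 0 < α)
    (X : Fin n → Fin (k + 1) → ℝ) (Y : Fin n → Fin (d + 1) → ℝ) :
    (∀ (x : Fin (k + 1) → ℝ) (y : Fin (d + 1) → ℝ), (∃ j, y = Pi.single j 1) →
      ∀ β : Fin d → Fin (k + 1) → ℝ,
        DifferentiableAt ℝ (fun b : Fin d → Fin (k + 1) → ℝ => sAlpha α x b y) β ∧
        ∀ (m : Fin d) (t : Fin (k + 1)),
          fderiv ℝ (fun b : Fin d → Fin (k + 1) → ℝ => sAlpha α x b y) β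
              (Pi.single m (Pi.single t 1)) =
            α * psiBlock α x β y m t) ∧
    ∀ β : Fin d → Fin (k + 1) → ℝ,
      (∀ b : Fin d → Fin (k + 1) → ℝ,
          (1 / (n : ℝ)) * ∑ i, sAlpha α (X i) b (Y i) ≤
            (1 / (n : ℝ)) * ∑ i, sAlpha α (X i) β (Y i)) →
      ∀ (m : Fin d) (t : Fin (k + 1)), ∑ i, psiBlock α (X i) β (Y i) m t = 0 := by
  have hα₁ : 1 + α ≠ 0 := by positivity
  refine ⟨fun x y _ β => ⟨(hasFDerivAt_sAlpha x α y β).differentiableAt,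
    fderiv_sAlpha_single x y hα₁ β⟩, fun β hmax m t => ?_⟩
  have hmean := (HasFDerivAt.fun_sum (u := Finset.univ) fun i _ =>
    (hasFDerivAt_sAlpha (X i) α (Y i) β).differentiableAt.hasFDerivAt).const_mul (1 / (n : ℝ))
  have hlocal : IsLocalMax (fun b => (1 / (n : ℝ)) * ∑ i, sAlpha α (X i) b (Y i)) β :=
    Eventually.of_forall hmax
  have hcrit := DFunLike.congr_fun (hlocal.hasFDerivAt_eq_zero hmean) (Pi.single m (Pi.single t 1))
  simp [fderiv_sAlpha_single _ _ hα₁, ← Finset.mul_sum, hα.ne'] at hcrit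
  rcases hcrit with rfl | hsum
  · simp
  · exact hsum

/-- Theorem 1, estimating equations of the minimum RP estimator:
for `α > 0`, any covariate `x` and any standard basis vector `y`, the map
`β ↦ s^{(α)}(y,β)` is differentiable with block-`m` gradient `α·Ψ_α(β,x,y)_m`;
consequently any (interior) maximizer `β` of `(1/n)∑_i s^{(α)}(y_i,β)` satisfies
the estimating equations `∑_i Ψ_α(β,x_i,y_i) = 0`. -/
theorem statement3 (d k n : ℕ) (hd : 1 ≤ d) (hk : 1 ≤ k) (α : ℝ) (hα : 0 < α)
    (X : Fin n → Fin (k + 1) → ℝ) (Y : Fin n → Fin (d + 1) → ℝ)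
    (hY : ∀ i, ∃ j, Y i = Pi.single j 1) :
    (∀ (x : Fin (k + 1) → ℝ) (y : Fin (d + 1) → ℝ), (∃ j, y = Pi.single j 1) →
      ∀ β : Fin d → Fin (k + 1) → ℝ,
        DifferentiableAt ℝ (fun b : Fin d → Fin (k + 1) → ℝ => sAlpha α x b y) β ∧
        ∀ (m : Fin d) (t : Fin (k + 1)),
          fderiv ℝ (fun b : Fin d → Fin (k + 1) → ℝ => sAlpha α x b y) β
              (Pi.single m (Pi.single t 1)) =
            α * psiBlock α x β y m t) ∧
    ∀ β : Fin d → Fin (k + 1) → ℝ,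
      (∀ b : Fin d → Fin (k + 1) → ℝ,
          (1 / (n : ℝ)) * ∑ i, sAlpha α (X i) b (Y i) ≤
            (1 / (n : ℝ)) * ∑ i, sAlpha α (X i) β (Y i)) →
      ∀ (m : Fin d) (t : Fin (k + 1)), ∑ i, psiBlock α (X i) β (Y i) m t = 0 :=
  statement3_general d k n α hα X Y

end
end

section
/- (Unbiasedness of the RP estimating equations under the model.) For every α ≥ 0, every parameter β, and every covariate x ∈ ℝ^{k+1}, the expectation of the RP score under the model distribution vanishes: Σ_{j=1}^{d+1} π_j(x,β)·Ψ_α(β,x,e_j) = 0 in ℝ^{d(k+1)}, where e_j denotes the j-th standard basis vector of ℝ^{d+1}. -/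
/-! Under the model, `e_j` is drawn with probability `π_j`, and `π_j · π_j^α = π_j^{α+1}`.
Hence both terms of the expected `m`-th block equal `Γ^{-α/(1+α)} π_m^{α+1} x`: the first
because only `j = m` contributes, the second because `Σ_j π_j^{α+1} / Γ = 1`. -/

open Matrix Filter

noncomputable section

theorem sum_mul_rpow_single_sub_eq_zero {ι : Type*} [Fintype ι] [DecidableEq ι]
    (p : ι → ℝ) (hp : ∀ i, 0 < p i) (α : ℝ) (m : ι) :
    ∑ j, p j * (p m ^ α * (Pi.single j 1 : ι → ℝ) m -
      p j ^ α / (∑ i, p i ^ (α + 1)) * p m ^ (α + 1)) = 0 := by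
  have mul_rpow : ∀ i, p i * p i ^ α = p i ^ (α + 1) := fun i => by
    rw [Real.rpow_add_one (hp i).ne', mul_comm]
  have hΓ : ∑ i, p i ^ (α + 1) ≠ 0 :=
    (Finset.sum_pos (fun i _ => Real.rpow_pos_of_pos (hp i) _) ⟨m, Finset.mem_univ m⟩).ne'
  have diagonal : ∑ j, p j * (p m ^ α * (Pi.single j 1 : ι → ℝ) m) = p m ^ (α + 1) := by
    rw [Finset.sum_eq_single m (fun j _ hj => by simp [hj.symm])
      (by simp), Pi.single_eq_same, mul_one, mul_rpow]
  have weighted : ∑ j, p j * (p j ^ α / (∑ i, p i ^ (α + 1)) * p m ^ (α + 1)) =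
      p m ^ (α + 1) := by
    simp_rw [← mul_assoc, mul_div_assoc', mul_rpow, ← Finset.sum_mul, ← Finset.sum_div,
      div_self hΓ, one_mul]
  simp_rw [mul_sub, Finset.sum_sub_distrib, diagonal, weighted, sub_self]

theorem plrmPi_pos {d k : ℕ} (x : Fin (k + 1) → ℝ) (β : Fin d → Fin (k + 1) → ℝ)
    (j : Fin (d + 1)) : 0 < plrmPi x β j := by
  unfold plrmPi
  split <;> positivity

theorem Ups_single {d k : ℕ} (α : ℝ) (x : Fin (k + 1) → ℝ) (β : Fin d → Fin (k + 1) → ℝ)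
    (j : Fin (d + 1)) : Ups α x β (Pi.single j 1) = plrmPi x β j ^ α := by
  simp [Ups, Pi.single_apply]

theorem statement7_general (d k : ℕ) (α : ℝ)
    (β : Fin d → Fin (k + 1) → ℝ) (x : Fin (k + 1) → ℝ)
    (m : Fin d) (t : Fin (k + 1)) :
    ∑ j : Fin (d + 1), plrmPi x β j * psiBlock α x β (Pi.single j 1) m t = 0 := by
  have centred := sum_mul_rpow_single_sub_eq_zero (plrmPi x β) (plrmPi_pos x β) α m.castSucc
  calc ∑ j, plrmPi x β j * psiBlock α x β (Pi.single j 1) m t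
      = Gam α x β ^ (-(α / (1 + α))) * x t *
          ∑ j, plrmPi x β j * (plrmPi x β m.castSucc ^ α * (Pi.single j 1 : _ → ℝ) m.castSucc -
            plrmPi x β j ^ α / Gam α x β * plrmPi x β m.castSucc ^ (α + 1)) := by
        rw [Finset.mul_sum]
        refine Finset.sum_congr rfl fun j _ => ?_
        rw [psiBlock, Ups_single]
        ring
    _ = 0 := by rw [Gam, centred, mul_zero]

/-- unbiasedness of the RP estimating equations under the model:
for every `α ≥ 0`, parameter `β` and covariate `x`, the expectation of the RP score
under the model distribution vanishes: `∑_{j=1}^{d+1} π_j(x,β)·Ψ_α(β,x,e_j) = 0`. -/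
theorem statement7 (d k : ℕ) (hd : 1 ≤ d) (hk : 1 ≤ k) (α : ℝ) (hα : 0 ≤ α)
    (β : Fin d → Fin (k + 1) → ℝ) (x : Fin (k + 1) → ℝ)
    (m : Fin d) (t : Fin (k + 1)) :
    ∑ j : Fin (d + 1), plrmPi x β j * psiBlock α x β (Pi.single j 1) m t = 0 :=
  statement7_general d k α β x m t

end
end

section
/- (Appendix B uniform lower bound.) Let d ≥ 1 and α ≥ 0. For every probability vector π ∈ ℝ^{d+1} with all entries positive and π_1 = 1/2, setting Γ = Σ_{j=1}^{d+1} π_j^{α+1}, the first coordinate of the vector Γ^{−α/(1+α)}·Δ*(π)·diag^{α−1}(π)·(e_1 − (π_1^α/Γ)·π) is at least 2^{−(α+1)}·d^{−α} > 0, where e_1 is the first standard basis vector of ℝ^{d+1}. In particular there is a positive constant K_α (depending only on α and d) bounding this coordinate from below uniformly over all such π. -/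
/-!
The vector `w = diag^{α-1}(π) (e₁ - (π₁^α / Γ) π)` is orthogonal to `π`, so the first row of
`Δ*(π)` sees only its diagonal entry and the coordinate equals
`Γ^{-α/(1+α)} · (π₁^α / Γ) · (Γ - π₁^{α+1})`. When `π₁ = 1/2` every `π_j ≤ 1/2`, hence
`Γ ≤ (1/2)^α = π₁^α ≤ 1` and both prefactors are at least `1`. What remains,
`Γ - π₁^{α+1} = ∑_{j ≥ 2} π_j^{α+1}`, is a sum of `(α+1)`-th powers of `d` numbers of total
mass `1/2`, which the power-mean inequality bounds below by `d · (1/(2d))^{α+1}`.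
-/

open Matrix Filter

noncomputable section

/-- `Δ(p) = diag(p) − ppᵀ`. -/
def deltaMat {n : ℕ} (p : Fin n → ℝ) : Matrix (Fin n) (Fin n) ℝ :=
  Matrix.diagonal p - Matrix.vecMulVec p p

/-- `Δ*(π)`: `Δ(π)` with its last row deleted. -/
def deltaStar {d : ℕ} (π : Fin (d + 1) → ℝ) : Matrix (Fin d) (Fin (d + 1)) ℝ :=
  Matrix.of fun m j => deltaMat π m.castSucc j

/-- `diag^γ(π)`. -/
def diagPow {d : ℕ} (π : Fin (d + 1) → ℝ) (γ : ℝ) : Matrix (Fin (d + 1)) (Fin (d + 1)) ℝ :=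
  Matrix.diagonal fun j => π j ^ γ

/-- The first coordinate of `Γ^{−α/(1+α)}·Δ*(π)·diag^{α−1}(π)·(e_1 − (π_1^α/Γ)·π)`,
where `Γ = ∑_j π_j^{α+1}`. -/
def firstCoord (d : ℕ) (hd : 1 ≤ d) (α : ℝ) (π : Fin (d + 1) → ℝ) : ℝ :=
  ((∑ j, π j ^ (α + 1)) ^ (-(α / (1 + α))) •
      (deltaStar π *ᵥ (diagPow π (α - 1) *ᵥ
        ((Pi.single (0 : Fin (d + 1)) 1 : Fin (d + 1) → ℝ) -
          (π 0 ^ α / (∑ j, π j ^ (α + 1))) • π)))) ⟨0, hd⟩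

lemma deltaMat_mulVec_apply {n : ℕ} (p w : Fin n → ℝ) (i : Fin n) :
    (deltaMat p *ᵥ w) i = p i * (w i - p ⬝ᵥ w) := by
  simp [deltaMat, Matrix.sub_mulVec, Matrix.mulVec_diagonal, Matrix.vecMulVec_mulVec, mul_sub,
    mul_comm]

lemma diagPow_mulVec_apply {d : ℕ} (π v : Fin (d + 1) → ℝ) (γ : ℝ) (j : Fin (d + 1)) :
    (diagPow π γ *ᵥ v) j = π j ^ γ * v j :=
  Matrix.mulVec_diagonal _ _ _

lemma firstCoord_eq (d : ℕ) (hd : 1 ≤ d) (α : ℝ) (π : Fin (d + 1) → ℝ) (hπ : ∀ j, 0 < π j) :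
    firstCoord d hd α π = (∑ j, π j ^ (α + 1)) ^ (-(α / (1 + α))) *
      (π 0 ^ α / ∑ j, π j ^ (α + 1)) * (∑ j, π j ^ (α + 1) - π 0 ^ (α + 1)) := by
  set Γ := ∑ j, π j ^ (α + 1)
  have hΓ : 0 < Γ := Finset.sum_pos (fun j _ => Real.rpow_pos_of_pos (hπ j) _)
    Finset.univ_nonempty
  have hmul : ∀ j, π j * π j ^ (α - 1) = π j ^ α := fun j => by
    rw [Real.rpow_sub_one (hπ j).ne', mul_div_cancel₀ _ (hπ j).ne']
  set w := diagPow π (α - 1) *ᵥ (Pi.single 0 1 - (π 0 ^ α / Γ) • π)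
  have horth : π ⬝ᵥ w = 0 := by
    simp only [w, dotProduct, diagPow_mulVec_apply, ← mul_assoc, hmul, Pi.sub_apply,
      Pi.smul_apply, smul_eq_mul, mul_sub, Finset.sum_sub_distrib]
    have hΓ_eq : ∑ j, π j ^ α * (π 0 ^ α / Γ) * π j = π 0 ^ α / Γ * Γ := by
      rw [Finset.mul_sum]
      refine Finset.sum_congr rfl fun j _ => ?_
      rw [Real.rpow_add_one (hπ j).ne']
      ring
    simp [hΓ_eq, Pi.single_apply, hΓ.ne']
  have hw0 : π 0 * w 0 = π 0 ^ α / Γ * (Γ - π 0 ^ (α + 1)) := by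
    simp only [w, diagPow_mulVec_apply, ← mul_assoc, hmul, Pi.sub_apply, Pi.single_eq_same,
      Pi.smul_apply, smul_eq_mul, Real.rpow_add_one (hπ 0).ne']
    field_simp
  have hrow : deltaStar π *ᵥ w = fun m => (deltaMat π *ᵥ w) m.castSucc := rfl
  rw [firstCoord, Pi.smul_apply, hrow]
  simp only [deltaMat_mulVec_apply, horth, sub_zero]
  rw [smul_eq_mul, mul_assoc]
  exact congrArg _ hw0

lemma sum_rpow_add_one_le {ι : Type*} (s : Finset ι) (x : ι → ℝ) {m α : ℝ} (hα : 0 ≤ α)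
    (hx : ∀ i ∈ s, 0 ≤ x i) (hxm : ∀ i ∈ s, x i ≤ m) :
    ∑ i ∈ s, x i ^ (α + 1) ≤ m ^ α * ∑ i ∈ s, x i := by
  rw [Finset.mul_sum]
  refine Finset.sum_le_sum fun i hi => ?_
  rw [Real.rpow_add_one' (hx i hi) (by linarith)]
  exact mul_le_mul_of_nonneg_right (Real.rpow_le_rpow (hx i hi) (hxm i hi) hα) (hx i hi)

lemma sum_rpow_sub_le_firstCoord (d : ℕ) (hd : 1 ≤ d) {α : ℝ} (hα : 0 ≤ α)
    (π : Fin (d + 1) → ℝ) (hπ : ∀ j, 0 < π j) (hΓ : ∑ j, π j ^ (α + 1) ≤ π 0 ^ α)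
    (hπ₀ : π 0 ^ α ≤ 1) :
    ∑ j, π j ^ (α + 1) - π 0 ^ (α + 1) ≤ firstCoord d hd α π := by
  set Γ := ∑ j, π j ^ (α + 1)
  have hΓ_pos : 0 < Γ := Finset.sum_pos (fun j _ => Real.rpow_pos_of_pos (hπ j) _)
    Finset.univ_nonempty
  have hS : 0 ≤ Γ - π 0 ^ (α + 1) := sub_nonneg.2 <|
    Finset.single_le_sum (fun j _ => (Real.rpow_pos_of_pos (hπ j) _).le) (Finset.mem_univ 0)
  have hscale : 1 ≤ Γ ^ (-(α / (1 + α))) :=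
    Real.one_le_rpow_of_pos_of_le_one_of_nonpos hΓ_pos (hΓ.trans hπ₀)
      (neg_nonpos.2 (by positivity))
  have hratio : 1 ≤ π 0 ^ α / Γ := (one_le_div hΓ_pos).2 hΓ
  rw [firstCoord_eq d hd α π hπ]
  calc Γ - π 0 ^ (α + 1) = 1 * 1 * (Γ - π 0 ^ (α + 1)) := by ring
    _ ≤ _ := by gcongr

lemma two_rpow_mul_le_sum_rpow {ι : Type*} (s : Finset ι) (x : ι → ℝ) {α : ℝ} (hα : 0 ≤ α)
    (hs : s.Nonempty) (hx : ∀ i ∈ s, 0 ≤ x i) (hsum : ∑ i ∈ s, x i = 1 / 2) :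
    (2 : ℝ) ^ (-(α + 1)) * (s.card : ℝ) ^ (-α) ≤ ∑ i ∈ s, x i ^ (α + 1) := by
  have hcard : (0 : ℝ) < s.card := by exact_mod_cast hs.card_pos
  have hpm := Real.rpow_sum_le_const_mul_sum_rpow_of_nonneg s (p := α + 1) (by linarith) hx
  rw [hsum, add_sub_cancel_right, one_div, Real.inv_rpow zero_le_two, ← Real.rpow_neg zero_le_two,
    mul_comm] at hpm
  rwa [Real.rpow_neg hcard.le, ← div_eq_mul_inv, div_le_iff₀ (by positivity)]

lemma two_rpow_mul_le_firstCoord (d : ℕ) (hd : 1 ≤ d) {α : ℝ} (hα : 0 ≤ α)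
    (π : Fin (d + 1) → ℝ) (hπ : ∀ j, 0 < π j) (hsum : ∑ j, π j = 1) (h₀ : π 0 = 1 / 2) :
    (2 : ℝ) ^ (-(α + 1)) * (d : ℝ) ^ (-α) ≤ firstCoord d hd α π := by
  set tail := Finset.univ.erase (0 : Fin (d + 1))
  have hsplit (f : Fin (d + 1) → ℝ) : f 0 + ∑ j ∈ tail, f j = ∑ j, f j :=
    Finset.add_sum_erase _ f (Finset.mem_univ 0)
  have htail : ∑ j ∈ tail, π j = 1 / 2 := by linarith [hsplit π]
  have hle (j : Fin (d + 1)) : π j ≤ 1 / 2 := by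
    rcases eq_or_ne j 0 with rfl | hj
    · exact h₀.le
    · exact htail ▸ Finset.single_le_sum (fun k _ => (hπ k).le)
        (Finset.mem_erase.2 ⟨hj, Finset.mem_univ j⟩)
  have hΓ : ∑ j, π j ^ (α + 1) ≤ π 0 ^ α := by
    simpa [hsum, h₀] using
      sum_rpow_add_one_le Finset.univ π hα (fun j _ => (hπ j).le) (fun j _ => hle j)
  have hπ₀ : π 0 ^ α ≤ 1 := by
    rw [h₀]; exact Real.rpow_le_one (by norm_num) (by norm_num) hα
  have hcard : tail.card = d := by simp [tail]
  calc (2 : ℝ) ^ (-(α + 1)) * (d : ℝ) ^ (-α) ≤ ∑ j ∈ tail, π j ^ (α + 1) := by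
        simpa [hcard] using two_rpow_mul_le_sum_rpow tail π hα
          ⟨⟨1, by omega⟩, by simp [tail, Fin.ext_iff]⟩ (fun j _ => (hπ j).le) htail
    _ = ∑ j, π j ^ (α + 1) - π 0 ^ (α + 1) := by linarith [hsplit fun j => π j ^ (α + 1)]
    _ ≤ firstCoord d hd α π := sum_rpow_sub_le_firstCoord d hd hα π hπ hΓ hπ₀

/-- Appendix B uniform lower bound: for every positive probability
vector `π` with `π_1 = 1/2`, the first coordinate of
`Γ^{−α/(1+α)}·Δ*(π)·diag^{α−1}(π)·(e_1 − (π_1^α/Γ)·π)` is at least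
`2^{−(α+1)}·d^{−α} > 0`; in particular there is a positive constant `K_α`
(depending only on `α` and `d`) bounding this coordinate from below uniformly. -/
theorem statement16 (d : ℕ) (hd : 1 ≤ d) (α : ℝ) (hα : 0 ≤ α) :
    (∀ π : Fin (d + 1) → ℝ, (∀ j, 0 < π j) → (∑ j, π j) = 1 → π 0 = 1 / 2 →
      (2 : ℝ) ^ (-(α + 1)) * (d : ℝ) ^ (-α) ≤ firstCoord d hd α π) ∧
    0 < (2 : ℝ) ^ (-(α + 1)) * (d : ℝ) ^ (-α) ∧
    ∃ K : ℝ, 0 < K ∧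
      ∀ π : Fin (d + 1) → ℝ, (∀ j, 0 < π j) → (∑ j, π j) = 1 → π 0 = 1 / 2 →
        K ≤ firstCoord d hd α π := by
  have hbound := two_rpow_mul_le_firstCoord d hd hα
  have hpos : 0 < (2 : ℝ) ^ (-(α + 1)) * (d : ℝ) ^ (-α) := by
    have : (0 : ℝ) < d := by exact_mod_cast hd
    positivity
  exact ⟨hbound, hpos, _, hpos, hbound⟩

end
end
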